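/- arXiv:2512.11087 — 5 statements merged into one kernel-verified Lean document; each statement's English description precedes it below -/
import Mathlib

section
/- Strong duality holds for box-constrained linear minimization with one linear constraint: for a ∈ ℝⁿ, c ∈ ℝ, g ∈ ℝⁿ, h ∈ ℝ, center x̂ ∈ ℝⁿ and radii ε ∈ ℝⁿ with ε ≥ 0, if the feasible set {x : |xⱼ - x̂ⱼ| ≤ εⱼ for all j, and gᵀx + h ≤ 0} is nonempty, then min over this feasible set of aᵀx + c equals sup over β ≥ 0 of D(β) := (a + βg)ᵀx̂ − Σⱼ |(a + βg)ⱼ| εⱼ + c + βh. -/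
/-!
The Lagrangian `L x β = φ x + β * G x` is convex and continuous in `x` on the compact convex
box and affine in `β ≥ 0`, so Sion's minimax theorem exchanges `⨅ x` and `⨆ β`. Working in
`EReal`, `⨆ β ≥ 0, L x β` is `φ x` at feasible `x` and `⊤` otherwise, so the inf-sup is the
primal value, while the sup-inf is the dual value because the minimum of `L · β` over the box is
computed coordinatewise: `q * t` on `|t - x̂| ≤ ε` is smallest at `t = x̂ ∓ ε`, where it is
`q * x̂ - |q| * ε`.
-/

open Finset

lemma EReal.isLUB_image_of_coe_eq_biSup {ι : Type*} {s : Set ι} {f : ι → ℝ} {p : ℝ}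
    (h : (p : EReal) = ⨆ i ∈ s, (f i : EReal)) : IsLUB (f '' s) p := by
  refine ⟨?_, fun r hr => ?_⟩
  · rintro _ ⟨i, hi, rfl⟩
    exact EReal.coe_le_coe_iff.1 (h ▸ le_iSup₂ (f := fun i _ => (f i : EReal)) i hi)
  · exact EReal.coe_le_coe_iff.1
      (h ▸ iSup₂_le fun i hi => EReal.coe_le_coe_iff.2 (hr ⟨i, hi, rfl⟩))

lemma EReal.biInf_coe_eq_of_isLeast {ι : Type*} {s : Set ι} {f : ι → ℝ} {d : ℝ}
    (h : IsLeast (f '' s) d) : ⨅ i ∈ s, (f i : EReal) = d := by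
  obtain ⟨⟨i, hi, rfl⟩, hle⟩ := h
  exact le_antisymm (iInf₂_le i hi)
    (le_iInf₂ fun j hj => EReal.coe_le_coe_iff.2 (hle ⟨j, hj, rfl⟩))

section LagrangeDuality

variable {E : Type*} {K : Set E} {φ G : E → ℝ}

lemma biInf_biSup_lagrangian_eq {x' : E} (hx' : x' ∈ K) (hGx' : G x' ≤ 0)
    (hmin : IsMinOn φ {x ∈ K | G x ≤ 0} x') :
    ⨅ x ∈ K, ⨆ β ∈ Set.Ici (0 : ℝ), ((φ x + β * G x : ℝ) : EReal) = φ x' := by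
  refine le_antisymm (iInf₂_le_of_le x' hx' (iSup₂_le fun β hβ => ?_)) (le_iInf₂ fun x hx => ?_)
  · exact EReal.coe_le_coe_iff.2 (by nlinarith [Set.mem_Ici.1 hβ])
  by_cases hGx : G x ≤ 0
  · refine le_iSup₂_of_le (0 : ℝ) (Set.mem_Ici.2 le_rfl) (EReal.coe_le_coe_iff.2 ?_)
    simpa using hmin ⟨hx, hGx⟩
  · push Not at hGx
    -- the multiplier is chosen so that `β * G x` covers the gap `φ x' - φ x`
    refine le_iSup₂_of_le (|φ x' - φ x| / G x) (div_nonneg (abs_nonneg _) hGx.le)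
      (EReal.coe_le_coe_iff.2 ?_)
    rw [div_mul_cancel₀ _ hGx.ne']
    linarith [le_abs_self (φ x' - φ x)]

theorem lagrange_strong_duality [TopologicalSpace E] [AddCommGroup E] [Module ℝ E]
    [IsTopologicalAddGroup E] [ContinuousSMul ℝ E] (hK : IsCompact K) (hKc : Convex ℝ K)
    (hφ : ConvexOn ℝ K φ) (hG : ConvexOn ℝ K G) (hφc : Continuous φ) (hGc : Continuous G)
    (hfeas : ∃ x ∈ K, G x ≤ 0) {D : ℝ → ℝ}
    (hD : ∀ β, 0 ≤ β → IsLeast ((fun x => φ x + β * G x) '' K) (D β)) :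
    sInf (φ '' {x ∈ K | G x ≤ 0}) = sSup (D '' Set.Ici 0) := by
  obtain ⟨x', ⟨hx', hGx'⟩, hmin⟩ := (hK.inter_right (isClosed_Iic.preimage hGc)).exists_isMinOn
    (hfeas.imp fun _ h => h) hφc.continuousOn
  have hcont_x (β : ℝ) : Continuous fun x => Real.toEReal (φ x + β * G x) :=
    continuous_coe_real_ereal.comp (hφc.add (continuous_const.mul hGc))
  have hcont_β (x : E) : Continuous fun β : ℝ => Real.toEReal (φ x + β * G x) :=
    continuous_coe_real_ereal.comp (continuous_const.add (continuous_id.mul continuous_const))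
  have minimax := Sion.minimax' (f := fun x β => Real.toEReal (φ x + β * G x)) (Y := Set.Ici 0)
    ⟨x', hx'⟩ hKc hK (fun β _ => (hcont_x β).lowerSemicontinuous.lowerSemicontinuousOn _)
    (fun β hβ => (hφ.add (hG.smul hβ)).quasiconvexOn.monotone_comp (g := Real.toEReal)
      EReal.coe_strictMono.monotone)
    (convex_Ici 0) (fun x _ => (hcont_β x).upperSemicontinuous.upperSemicontinuousOn _)
    (fun x _ => ((concaveOn_const (φ x) (convex_Ici 0)).add
      ((LinearMap.mulRight ℝ (G x)).concaveOn (convex_Ici 0))).quasiconcaveOn.monotone_comp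
        (g := Real.toEReal) EReal.coe_strictMono.monotone)
  rw [biInf_biSup_lagrangian_eq hx' hGx' hmin, iSup_congr fun β => iSup_congr
    fun (hβ : β ∈ Set.Ici 0) => EReal.biInf_coe_eq_of_isLeast (hD β hβ)] at minimax
  have hprimal : IsLeast (φ '' {x ∈ K | G x ≤ 0}) (φ x') :=
    ⟨⟨x', ⟨hx', hGx'⟩, rfl⟩, by rintro _ ⟨x, hx, rfl⟩; exact isMinOn_iff.1 hmin x hx⟩
  rw [hprimal.csInf_eq,
    (EReal.isLUB_image_of_coe_eq_biSup minimax).csSup_eq (Set.nonempty_Ici.image D)]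

end LagrangeDuality

lemma isLeast_mul_image_Icc (q x e : ℝ) (he : 0 ≤ e) :
    IsLeast ((q * ·) '' Set.Icc (x - e) (x + e)) (q * x - |q| * e) := by
  rcases le_total 0 q with hq | hq
  · rw [abs_of_nonneg hq]
    refine ⟨⟨x - e, ⟨le_rfl, by linarith⟩, by ring⟩, ?_⟩
    rintro _ ⟨y, hy, rfl⟩
    nlinarith [hy.1]
  · rw [abs_of_nonpos hq]
    refine ⟨⟨x + e, ⟨by linarith, le_rfl⟩, by ring⟩, ?_⟩
    rintro _ ⟨y, hy, rfl⟩
    nlinarith [hy.2]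

lemma isLeast_sum_image_pi {ι M : Type*} [Fintype ι] [AddCommMonoid M] [PartialOrder M]
    [IsOrderedAddMonoid M] {α : ι → Type*} {s : ∀ j, Set (α j)} {f : ∀ j, α j → M} {m : ι → M}
    (h : ∀ j, IsLeast (f j '' s j) (m j)) :
    IsLeast ((fun x => ∑ j, f j (x j)) '' Set.univ.pi s) (∑ j, m j) := by
  choose y hy hym using fun j => (h j).1
  refine ⟨⟨y, Set.mem_univ_pi.2 hy, sum_congr rfl fun j _ => hym j⟩, ?_⟩
  rintro _ ⟨x, hx, rfl⟩
  exact sum_le_sum fun j _ => (h j).2 ⟨x j, Set.mem_univ_pi.1 hx j, rfl⟩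

lemma isLeast_sum_mul_add_image_box {ι : Type*} [Fintype ι] (q xhat ε : ι → ℝ) (C : ℝ)
    (hε : ∀ j, 0 ≤ ε j) :
    IsLeast ((fun x => ∑ j, q j * x j + C) ''
        Set.univ.pi fun j => Set.Icc (xhat j - ε j) (xhat j + ε j))
      (∑ j, q j * xhat j - ∑ j, |q j| * ε j + C) := by
  have := (add_left_mono (a := C)).map_isLeast
    (isLeast_sum_image_pi fun j => isLeast_mul_image_Icc (q j) (xhat j) (ε j) (hε j))
  simpa only [Set.image_image, sum_sub_distrib] using this

/-- Strong duality for box-constrained linear minimization with one linear constraint. -/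
theorem strong_duality_single_constraint
    (n : ℕ) (a g xhat ε : Fin n → ℝ) (c h : ℝ)
    (hε : ∀ j, 0 ≤ ε j)
    (hfeas : ∃ x : Fin n → ℝ, (∀ j, |x j - xhat j| ≤ ε j) ∧ ∑ j, g j * x j + h ≤ 0) :
    sInf {v : ℝ | ∃ x : Fin n → ℝ, (∀ j, |x j - xhat j| ≤ ε j) ∧
        ∑ j, g j * x j + h ≤ 0 ∧ v = ∑ j, a j * x j + c}
      = sSup {v : ℝ | ∃ β : ℝ, 0 ≤ β ∧
        v = ∑ j, (a j + β * g j) * xhat j - ∑ j, |a j + β * g j| * ε j + c + β * h} := by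
  set K : Set (Fin n → ℝ) := Set.univ.pi fun j => Set.Icc (xhat j - ε j) (xhat j + ε j)
  have mem_K (x : Fin n → ℝ) : x ∈ K ↔ ∀ j, |x j - xhat j| ≤ ε j := by
    simp only [K, Set.mem_univ_pi, ← Set.mem_Icc_iff_abs_le, abs_sub_comm]
  have hKc : Convex ℝ K := convex_pi fun j _ => convex_Icc _ _
  have duality := lagrange_strong_duality (K := K) (φ := fun x => ∑ j, a j * x j + c)
    (G := fun x => ∑ j, g j * x j + h)
    (D := fun β => ∑ j, (a j + β * g j) * xhat j - ∑ j, |a j + β * g j| * ε j + c + β * h)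
    (isCompact_univ_pi fun j => isCompact_Icc) hKc
    ((LinearMap.convexOn (dotProductBilin ℝ ℝ a) hKc).add_const c)
    ((LinearMap.convexOn (dotProductBilin ℝ ℝ g) hKc).add_const h) (by fun_prop) (by fun_prop)
    (let ⟨x, hx, hgx⟩ := hfeas; ⟨x, (mem_K x).2 hx, hgx⟩)
    fun β _ => by
      have lagrangian : (fun x : Fin n → ℝ => ∑ j, a j * x j + c + β * (∑ j, g j * x j + h))
          = fun x => ∑ j, (a j + β * g j) * x j + (c + β * h) := by
        funext x
        simp only [add_mul, sum_add_distrib, mul_assoc, ← mul_sum]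
        ring
      rw [lagrangian]
      convert isLeast_sum_mul_add_image_box (fun j => a j + β * g j) xhat ε (c + β * h) hε
        using 1
      ring
  convert duality using 2 <;> ext v <;>
    simp only [Set.mem_ofPred_eq, Set.mem_image, Set.mem_Ici, ← mem_K, and_assoc, eq_comm]
end

section
/- If the feasible set 𝒳 ∩ {x : gᵀx + h ≤ 0} is nonempty for the box 𝒳 = {x : |xⱼ − x̂ⱼ| ≤ εⱼ}, then the dual objective D(β) = (a + βg)ᵀx̂ − Σⱼ |(a + βg)ⱼ| εⱼ + c + βh tends to −∞ as β → +∞ unless gᵀx̂ + h − Σⱼ|gⱼ|εⱼ = 0, and in all feasible cases sup_{β ≥ 0} D(β) is attained (the supremum is a maximum). -/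
/-!
Once `β` passes every breakpoint `|aⱼ| / |gⱼ|`, each `|aⱼ + β gⱼ|` grows like `β |gⱼ|`, so `D` is
affine on a ray `[B, ∞)` with slope `S = gᵀx̂ + h - ∑ⱼ |gⱼ| εⱼ`, the minimum of `gᵀx + h` over the
box. Feasibility forces `S ≤ 0`. If `S < 0` the affine tail tends to `-∞`; in any case `D` does not
increase past `B`, so its maximum on the compact interval `[0, B]` is its supremum on `[0, ∞)`.
-/

open Finset Filter

theorem abs_add_mul_of_mul_nonneg {x y t : ℝ} (hxy : 0 ≤ x * y) (ht : 0 ≤ t) :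
    |x + t * y| = |x| + t * |y| := by
  rw [(abs_add_eq_add_abs_iff _ _).mpr, abs_mul, abs_of_nonneg ht]
  rcases mul_nonneg_iff.mp hxy with ⟨hx, hy⟩ | ⟨hx, hy⟩
  · exact .inl ⟨hx, mul_nonneg ht hy⟩
  · exact .inr ⟨hx, mul_nonpos_of_nonneg_of_nonpos ht hy⟩

theorem eventually_add_mul_mul_nonneg (a g : ℝ) :
    ∀ᶠ β in atTop, 0 ≤ (a + β * g) * g := by
  filter_upwards [eventually_ge_atTop (|a| / |g|)] with β hβ
  rcases eq_or_ne g 0 with rfl | hg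
  · simp
  have hβg : |a| ≤ β * |g| := (div_le_iff₀ (abs_pos.mpr hg)).mp hβ
  calc 0 ≤ (β * |g| - |a|) * |g| := mul_nonneg (by linarith) (abs_nonneg g)
    _ ≤ (a + β * g) * g := by
      rw [sub_mul, mul_assoc, abs_mul_abs_self, ← abs_mul]
      nlinarith [neg_abs_le (a * g)]

theorem exists_isMaxOn_Ici_of_le_right {α β : Type*} [LinearOrder α] [TopologicalSpace α]
    [CompactIccSpace α] [LinearOrder β] [TopologicalSpace β] [ClosedIciTopology β]
    {f : α → β} {a b : α} (hab : a ≤ b) (hf : ContinuousOn f (Set.Icc a b))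
    (htail : ∀ x, b ≤ x → f x ≤ f b) : ∃ x, a ≤ x ∧ ∀ y, a ≤ y → f y ≤ f x := by
  obtain ⟨x, ⟨hax, -⟩, hmax⟩ := isCompact_Icc.exists_isMaxOn (Set.nonempty_Icc.mpr hab) hf
  refine ⟨x, hax, fun y hay => ?_⟩
  rcases le_total y b with hyb | hby
  · exact hmax ⟨hay, hyb⟩
  · exact (htail y hby).trans (hmax ⟨hab, le_rfl⟩)

section

variable {ι : Type*} [Fintype ι] (a g xhat ε : ι → ℝ) (c h : ℝ)

def dualObjective (β : ℝ) : ℝ :=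
  ∑ j, (a j + β * g j) * xhat j - ∑ j, |a j + β * g j| * ε j + c + β * h

def boxConstraintMin : ℝ :=
  ∑ j, g j * xhat j + h - ∑ j, |g j| * ε j

variable {g xhat ε h} in
theorem boxConstraintMin_le {x : ι → ℝ} (hx : ∀ j, |x j - xhat j| ≤ ε j) :
    boxConstraintMin g xhat ε h ≤ ∑ j, g j * x j + h := by
  have hcoord : ∀ j, g j * xhat j - |g j| * ε j ≤ g j * x j := fun j => by
    have := mul_le_mul_of_nonneg_left (hx j) (abs_nonneg (g j))
    rw [← abs_mul] at this
    linarith [neg_abs_le (g j * (x j - xhat j))]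
  have := sum_le_sum fun j (_ : j ∈ univ) => hcoord j
  rw [sum_sub_distrib] at this
  unfold boxConstraintMin
  linarith

theorem continuous_dualObjective : Continuous (dualObjective a g xhat ε c h) := by
  unfold dualObjective
  fun_prop

variable {a g} in
theorem dualObjective_add_mul {B t : ℝ} (hB : ∀ j, 0 ≤ (a j + B * g j) * g j) (ht : 0 ≤ t) :
    dualObjective a g xhat ε c h (B + t) =
      dualObjective a g xhat ε c h B + t * boxConstraintMin g xhat ε h := by
  have habs : ∀ j, |a j + (B + t) * g j| = |a j + B * g j| + t * |g j| := fun j => by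
    rw [add_mul, ← add_assoc, abs_add_mul_of_mul_nonneg (hB j) ht]
  simp only [dualObjective, boxConstraintMin, habs]
  simp only [add_mul, sum_add_distrib, mul_sub, mul_add, mul_sum, mul_assoc]
  ring

theorem exists_dualObjective_eq_affine :
    ∃ B, 0 ≤ B ∧ ∀ β, B ≤ β → dualObjective a g xhat ε c h β =
      dualObjective a g xhat ε c h B + (β - B) * boxConstraintMin g xhat ε h := by
  obtain ⟨B, hB⟩ := eventually_atTop.mp <|
    (eventually_all.mpr fun j => eventually_add_mul_mul_nonneg (a j) (g j)).and
      (eventually_ge_atTop (0 : ℝ))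
  refine ⟨B, (hB B le_rfl).2, fun β hβ => ?_⟩
  simpa using dualObjective_add_mul xhat ε c h (hB B le_rfl).1 (sub_nonneg.mpr hβ)

variable {g xhat ε h}

theorem tendsto_dualObjective_atBot (hS : boxConstraintMin g xhat ε h < 0) :
    Tendsto (dualObjective a g xhat ε c h) atTop atBot := by
  obtain ⟨B, -, hB⟩ := exists_dualObjective_eq_affine a g xhat ε c h
  have hline : Tendsto (fun β => dualObjective a g xhat ε c h B +
      (β - B) * boxConstraintMin g xhat ε h) atTop atBot :=
    tendsto_atBot_add_const_left _ _ <|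
      (tendsto_atTop_add_const_right _ _ tendsto_id).atTop_mul_const_of_neg hS
  exact hline.congr' <| (eventually_ge_atTop B).mono fun β hβ => (hB β hβ).symm

theorem exists_forall_le_dualObjective (hS : boxConstraintMin g xhat ε h ≤ 0) :
    ∃ βstar, 0 ≤ βstar ∧ ∀ β, 0 ≤ β →
      dualObjective a g xhat ε c h β ≤ dualObjective a g xhat ε c h βstar := by
  obtain ⟨B, hB0, hB⟩ := exists_dualObjective_eq_affine a g xhat ε c h
  refine exists_isMaxOn_Ici_of_le_right hB0 (continuous_dualObjective ..).continuousOn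
    fun β hβ => ?_
  rw [hB β hβ]
  linarith [mul_nonpos_of_nonneg_of_nonpos (sub_nonneg.mpr hβ) hS]

end

theorem dual_objective_sup_attained_general
    (n : ℕ) (a g xhat ε : Fin n → ℝ) (c h : ℝ)
    (hfeas : ∃ x : Fin n → ℝ, (∀ j, |x j - xhat j| ≤ ε j) ∧ ∑ j, g j * x j + h ≤ 0) :
    ((∑ j, g j * xhat j + h - ∑ j, |g j| * ε j) ≠ 0 →
      Tendsto (fun β : ℝ =>
          ∑ j, (a j + β * g j) * xhat j - ∑ j, |a j + β * g j| * ε j + c + β * h)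
        atTop atBot) ∧
    (∃ βstar : ℝ, 0 ≤ βstar ∧ ∀ β : ℝ, 0 ≤ β →
      (∑ j, (a j + β * g j) * xhat j - ∑ j, |a j + β * g j| * ε j + c + β * h)
        ≤ (∑ j, (a j + βstar * g j) * xhat j - ∑ j, |a j + βstar * g j| * ε j + c
            + βstar * h)) := by
  obtain ⟨x, hx, hgx⟩ := hfeas
  have hS : boxConstraintMin g xhat ε h ≤ 0 := (boxConstraintMin_le hx).trans hgx
  exact ⟨fun hne => tendsto_dualObjective_atBot a c (hS.lt_of_ne hne),
    exists_forall_le_dualObjective a c hS⟩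

/-- If the feasible set is nonempty, then D(β) → −∞ as β → ∞ unless the concretized
minimum of the constraint is exactly 0, and in all feasible cases the supremum of the
dual objective over β ≥ 0 is attained. -/
theorem dual_objective_sup_attained
    (n : ℕ) (a g xhat ε : Fin n → ℝ) (c h : ℝ)
    (hε : ∀ j, 0 ≤ ε j)
    (hfeas : ∃ x : Fin n → ℝ, (∀ j, |x j - xhat j| ≤ ε j) ∧ ∑ j, g j * x j + h ≤ 0) :
    ((∑ j, g j * xhat j + h - ∑ j, |g j| * ε j) ≠ 0 →
      Tendsto (fun β : ℝ =>
          ∑ j, (a j + β * g j) * xhat j - ∑ j, |a j + β * g j| * ε j + c + β * h)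
        atTop atBot) ∧
    (∃ βstar : ℝ, 0 ≤ βstar ∧ ∀ β : ℝ, 0 ≤ β →
      (∑ j, (a j + β * g j) * xhat j - ∑ j, |a j + β * g j| * ε j + c + β * h)
        ≤ (∑ j, (a j + βstar * g j) * xhat j - ∑ j, |a j + βstar * g j| * ε j + c
            + βstar * h)) :=
  dual_objective_sup_attained_general n a g xhat ε c h hfeas
end

section
/- Componentwise tightness of relaxed clipping: with 𝒳 = {x : x̂ − ε ≤ x ≤ x̂ + ε}, ε > 0 componentwise, constraint aᵀx + c ≤ 0 feasible over 𝒳, and aᵢ > 0, the clipped upper bound min{x̂ᵢ + εᵢ, (−Σ_{j≠i}(aⱼx̂ⱼ − |aⱼ|εⱼ) − c)/aᵢ} is attained: there exists a feasible point x ∈ 𝒳 with aᵀx + c ≤ 0 whose i-th coordinate equals this value. -/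
/-!
Over the box `|x - x̂| ≤ ε` the term `aⱼ xⱼ` is smallest at the worst-case point
`xⱼ = x̂ⱼ - sign(aⱼ) εⱼ`, where it equals `aⱼ x̂ⱼ - |aⱼ| εⱼ`. Put every coordinate `j ≠ i` there
and `xᵢ = t`: the constraint becomes `aᵢ t ≤ -Σ_{j≠i}(aⱼ x̂ⱼ - |aⱼ| εⱼ) - c`, so the clipped bound
`t` satisfies it, and `t ≥ x̂ᵢ - εᵢ` because any feasible point bounds the worst-case sum.
-/

open Finset

lemma mul_sub_abs_mul_le_mul {a x₀ e x : ℝ} (hx : x ∈ Set.Icc (x₀ - e) (x₀ + e)) :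
    a * x₀ - |a| * e ≤ a * x := by
  rcases le_or_gt 0 a with ha | ha
  · rw [abs_of_nonneg ha]
    nlinarith [hx.1]
  · rw [abs_of_neg ha]
    nlinarith [hx.2]

lemma mul_sub_sign_mul (a x₀ e : ℝ) : a * (x₀ - SignType.sign a * e) = a * x₀ - |a| * e := by
  rw [mul_sub, ← mul_assoc, self_mul_sign]

lemma sub_sign_mul_mem_Icc (a x₀ : ℝ) {e : ℝ} (he : 0 ≤ e) :
    x₀ - SignType.sign a * e ∈ Set.Icc (x₀ - e) (x₀ + e) := by
  rcases lt_trichotomy a 0 with ha | rfl | ha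
  · simp only [sign_neg ha, SignType.coe_neg_one, Set.mem_Icc]
    constructor <;> linarith
  · simp only [sign_zero, SignType.coe_zero, Set.mem_Icc]
    constructor <;> linarith
  · simp only [sign_pos ha, SignType.coe_one, Set.mem_Icc]
    constructor <;> linarith

/-- Componentwise tightness of relaxed clipping: the clipped upper bound in coordinate i
is attained by a feasible point. -/
theorem relaxed_clipping_tight
    (n : ℕ) (a xhat ε : Fin n → ℝ) (c : ℝ)
    (hε : ∀ j, 0 < ε j)
    (hfeas : ∃ x : Fin n → ℝ, (∀ j, xhat j - ε j ≤ x j ∧ x j ≤ xhat j + ε j) ∧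
      ∑ j, a j * x j + c ≤ 0)
    (i : Fin n) (hai : 0 < a i) :
    ∃ x : Fin n → ℝ, (∀ j, xhat j - ε j ≤ x j ∧ x j ≤ xhat j + ε j) ∧
      ∑ j, a j * x j + c ≤ 0 ∧
      x i = min (xhat i + ε i)
        ((-(∑ j ∈ Finset.univ.erase i, (a j * xhat j - |a j| * ε j)) - c) / a i) := by
  obtain ⟨x₀, hx₀, hx₀c⟩ := hfeas
  set S := ∑ j ∈ univ.erase i, (a j * xhat j - |a j| * ε j)
  have hlow : xhat i - ε i ≤ (-S - c) / a i := by
    have : S + a i * (xhat i - ε i) ≤ ∑ j, a j * x₀ j := by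
      rw [← sum_erase_add _ _ (mem_univ i)]
      exact add_le_add (sum_le_sum fun j _ => mul_sub_abs_mul_le_mul (hx₀ j))
        (mul_le_mul_of_nonneg_left (hx₀ i).1 hai.le)
    rw [le_div_iff₀ hai]
    linarith
  set t := min (xhat i + ε i) ((-S - c) / a i)
  set x := Function.update (fun j => xhat j - SignType.sign (a j) * ε j) i t with hx
  have hsum : ∑ j, a j * x j = a i * t + S := by
    rw [← add_sum_erase _ _ (mem_univ i), hx, Function.update_self]
    refine congrArg _ (sum_congr rfl fun j hj => ?_)
    rw [Function.update_of_ne (ne_of_mem_erase hj), mul_sub_sign_mul]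
  refine ⟨x, fun j => ?_, ?_, by rw [hx, Function.update_self]⟩
  · rcases eq_or_ne j i with rfl | hj
    · rw [hx, Function.update_self]
      exact ⟨le_min (by linarith [hε j]) hlow, min_le_left _ _⟩
    · rw [hx, Function.update_of_ne hj]
      exact sub_sign_mul_mem_Icc (a j) (xhat j) (hε j).le
  · have : a i * t ≤ -S - c := (le_div_iff₀' hai).1 (min_le_right _ _)
    linarith
end

section
/- Tightest axis-aligned over-approximation: for the box 𝒳 = {x : x̂ − ε ≤ x ≤ x̂ + ε} with ε > 0 and a feasible constraint aᵀx + c ≤ 0, the clipped box 𝒳′ defined by replacing, for each i with aᵢ ≠ 0, the corresponding bound by the closed-form clip of Theorem (upper bound if aᵢ > 0, lower bound if aᵢ < 0) satisfies: (i) 𝒳 ∩ {x : aᵀx + c ≤ 0} ⊆ 𝒳′ ⊆ 𝒳, and (ii) any axis-aligned box containing 𝒳 ∩ {x : aᵀx + c ≤ 0} contains 𝒳′ ... i.e., 𝒳′ is the smallest box containing the feasible set. -/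
open Finset

/-
The projection of the feasible set onto coordinate `i` is an interval: since the other
coordinates can independently be moved to the corner minimizing `∑_{j ≠ i} aⱼxⱼ`, a value
`t ∈ [x̂ᵢ - εᵢ, x̂ᵢ + εᵢ]` is attained by a feasible point iff `aᵢ t ≤ -Sᵢ - c`, where `Sᵢ` is
that minimum. Dividing by `aᵢ` according to its sign, the endpoints of this interval are
exactly the clipped bounds, and the smallest box containing a set is the product of its
coordinate projections.
-/

section Interval

variable {K : Type*} [Field K] [LinearOrder K] [IsStrictOrderedRing K]

theorem isGreatest_Icc_inter_mul_le {l u a b : K}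
    (h : (Set.Icc l u ∩ {t | a * t ≤ b}).Nonempty) :
    IsGreatest (Set.Icc l u ∩ {t | a * t ≤ b}) (if 0 < a then min u (b / a) else u) := by
  split_ifs with ha
  · have hset : Set.Icc l u ∩ {t | a * t ≤ b} = Set.Icc l (min u (b / a)) := by
      ext t
      simp only [Set.mem_inter_iff, Set.mem_Icc, Set.mem_ofPred_eq, le_min_iff,
        le_div_iff₀ ha, mul_comm _ a]
      tauto
    rw [hset] at h ⊢
    exact isGreatest_Icc (Set.nonempty_Icc.1 h)
  · obtain ⟨s, ⟨hls, hsu⟩, hs⟩ := h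
    refine ⟨⟨⟨hls.trans hsu, le_rfl⟩, ?_⟩, fun t ht => ht.1.2⟩
    exact (mul_le_mul_of_nonpos_left hsu (not_lt.1 ha)).trans hs

theorem isLeast_Icc_inter_mul_le {l u a b : K}
    (h : (Set.Icc l u ∩ {t | a * t ≤ b}).Nonempty) :
    IsLeast (Set.Icc l u ∩ {t | a * t ≤ b}) (if a < 0 then max l (b / a) else l) := by
  split_ifs with ha
  · have hset : Set.Icc l u ∩ {t | a * t ≤ b} = Set.Icc (max l (b / a)) u := by
      ext t
      simp only [Set.mem_inter_iff, Set.mem_Icc, Set.mem_ofPred_eq, max_le_iff,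
        div_le_iff_of_neg ha, mul_comm _ a]
      tauto
    rw [hset] at h ⊢
    exact isLeast_Icc (Set.nonempty_Icc.1 h)
  · obtain ⟨s, ⟨hls, hsu⟩, hs⟩ := h
    refine ⟨⟨⟨le_rfl, hls.trans hsu⟩, ?_⟩, fun t ht => ht.1.1⟩
    exact (mul_le_mul_of_nonneg_left hls (not_lt.1 ha)).trans hs

end Interval

section Box

variable {R : Type*} [CommRing R] [LinearOrder R] [IsStrictOrderedRing R]

theorem mul_sub_abs_mul_le_mul_s11 {a xhat ε t : R} (h₁ : xhat - ε ≤ t) (h₂ : t ≤ xhat + ε) :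
    a * xhat - |a| * ε ≤ a * t := by
  have hdev : |a * (t - xhat)| ≤ |a| * ε := by
    rw [abs_mul]
    exact mul_le_mul_of_nonneg_left (abs_sub_le_iff.2 ⟨by linarith, by linarith⟩) (abs_nonneg a)
  linarith [neg_abs_le (a * (t - xhat))]

theorem exists_mul_eq_mul_sub_abs_mul (a xhat : R) {ε : R} (hε : 0 ≤ ε) :
    ∃ t, (xhat - ε ≤ t ∧ t ≤ xhat + ε) ∧ a * t = a * xhat - |a| * ε := by
  rcases le_or_gt 0 a with ha | ha
  · exact ⟨xhat - ε, ⟨le_rfl, by linarith⟩, by rw [abs_of_nonneg ha]; ring⟩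
  · exact ⟨xhat + ε, ⟨by linarith, le_rfl⟩, by rw [abs_of_neg ha]; ring⟩

variable {ι : Type*} [Fintype ι]

def box (xhat ε : ι → R) : Set (ι → R) :=
  {x | ∀ j, xhat j - ε j ≤ x j ∧ x j ≤ xhat j + ε j}

def feasibleSet (a xhat ε : ι → R) (c : R) : Set (ι → R) :=
  {x | x ∈ box xhat ε ∧ ∑ j, a j * x j + c ≤ 0}

variable [DecidableEq ι]

def minSumErase (a xhat ε : ι → R) (i : ι) : R :=
  ∑ j ∈ univ.erase i, (a j * xhat j - |a j| * ε j)

theorem image_eval_feasibleSet {a xhat ε : ι → R} (c : R) (hε : 0 ≤ ε) (i : ι) :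
    (fun x => x i) '' feasibleSet a xhat ε c =
      Set.Icc (xhat i - ε i) (xhat i + ε i) ∩ {t | a i * t ≤ -minSumErase a xhat ε i - c} := by
  ext t
  constructor
  · rintro ⟨x, ⟨hx, hsum⟩, rfl⟩
    have hrest : minSumErase a xhat ε i ≤ ∑ j ∈ univ.erase i, a j * x j :=
      sum_le_sum fun j _ => mul_sub_abs_mul_le_mul_s11 (hx j).1 (hx j).2
    have hsplit := add_sum_erase univ (fun j => a j * x j) (mem_univ i)
    exact ⟨hx i, by simp only [Set.mem_ofPred_eq]; linarith⟩
  · rintro ⟨ht, hat⟩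
    choose m hm hma using fun j => exists_mul_eq_mul_sub_abs_mul (a j) (xhat j) (hε j)
    refine ⟨Function.update m i t, ⟨fun j => ?_, ?_⟩, Function.update_self i t m⟩
    · rcases eq_or_ne j i with rfl | hj
      · rw [Function.update_self]; exact ht
      · rw [Function.update_of_ne hj]; exact hm j
    · have hrest : ∑ j ∈ univ.erase i, a j * Function.update m i t j =
          minSumErase a xhat ε i :=
        sum_congr rfl fun j hj => by rw [Function.update_of_ne (ne_of_mem_erase hj), hma]
      rw [← add_sum_erase univ _ (mem_univ i), hrest, Function.update_self]
      simp only [Set.mem_ofPred_eq] at hat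
      linarith

end Box

theorem clipped_box_tightest_general
    (n : ℕ) (a xhat ε : Fin n → ℝ) (c : ℝ)
    (hfeas : ∃ x : Fin n → ℝ, (∀ j, xhat j - ε j ≤ x j ∧ x j ≤ xhat j + ε j) ∧
      ∑ j, a j * x j + c ≤ 0)
    (clip : Fin n → ℝ)
    (hclip : ∀ i, clip i =
      (-(∑ j ∈ Finset.univ.erase i, (a j * xhat j - |a j| * ε j)) - c) / a i)
    (lo hi : Fin n → ℝ)
    (hlo : ∀ i, lo i = if a i < 0 then max (xhat i - ε i) (clip i) else xhat i - ε i)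
    (hhi : ∀ i, hi i = if 0 < a i then min (xhat i + ε i) (clip i) else xhat i + ε i) :
    -- (i) feasible set ⊆ clipped box ⊆ original box
    (∀ x : Fin n → ℝ, (∀ j, xhat j - ε j ≤ x j ∧ x j ≤ xhat j + ε j) →
      ∑ j, a j * x j + c ≤ 0 → ∀ i, lo i ≤ x i ∧ x i ≤ hi i) ∧
    (∀ i, xhat i - ε i ≤ lo i ∧ hi i ≤ xhat i + ε i) ∧
    -- (ii) any axis-aligned box containing the feasible set contains the clipped box
    (∀ lo' hi' : Fin n → ℝ,
      (∀ x : Fin n → ℝ, (∀ j, xhat j - ε j ≤ x j ∧ x j ≤ xhat j + ε j) →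
        ∑ j, a j * x j + c ≤ 0 → ∀ i, lo' i ≤ x i ∧ x i ≤ hi' i) →
      ∀ i, lo' i ≤ lo i ∧ hi i ≤ hi' i) := by
  obtain ⟨x₀, hx₀⟩ := hfeas
  have hε : 0 ≤ ε := fun j => show (0 : ℝ) ≤ ε j by linarith [hx₀.1 j]
  have hproj := image_eval_feasibleSet (a := a) (xhat := xhat) c hε
  have hne : ∀ i, ((fun x => x i) '' feasibleSet a xhat ε c).Nonempty :=
    fun i => ⟨x₀ i, x₀, hx₀, rfl⟩
  have hleast : ∀ i, IsLeast ((fun x => x i) '' feasibleSet a xhat ε c) (lo i) := fun i => by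
    rw [hproj, hlo, hclip]
    exact isLeast_Icc_inter_mul_le (hproj i ▸ hne i)
  have hgreatest : ∀ i, IsGreatest ((fun x => x i) '' feasibleSet a xhat ε c) (hi i) :=
    fun i => by
      rw [hproj, hhi, hclip]
      exact isGreatest_Icc_inter_mul_le (hproj i ▸ hne i)
  refine ⟨fun x hx hsum i => ?_, fun i => ?_, fun lo' hi' hsub i => ?_⟩
  · exact ⟨(hleast i).2 ⟨x, ⟨hx, hsum⟩, rfl⟩, (hgreatest i).2 ⟨x, ⟨hx, hsum⟩, rfl⟩⟩
  · obtain ⟨x, ⟨hx, -⟩, hxlo⟩ := (hleast i).1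
    obtain ⟨y, ⟨hy, -⟩, hyhi⟩ := (hgreatest i).1
    exact ⟨hxlo ▸ (hx i).1, hyhi ▸ (hy i).2⟩
  · obtain ⟨x, ⟨hx, hxs⟩, hxlo⟩ := (hleast i).1
    obtain ⟨y, ⟨hy, hys⟩, hyhi⟩ := (hgreatest i).1
    exact ⟨hxlo ▸ (hsub x hx hxs i).1, hyhi ▸ (hsub y hy hys i).2⟩

/-- The clipped box is the tightest axis-aligned over-approximation of the feasible set. -/
theorem clipped_box_tightest
    (n : ℕ) (a xhat ε : Fin n → ℝ) (c : ℝ)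
    (hε : ∀ j, 0 < ε j)
    (hfeas : ∃ x : Fin n → ℝ, (∀ j, xhat j - ε j ≤ x j ∧ x j ≤ xhat j + ε j) ∧
      ∑ j, a j * x j + c ≤ 0)
    (clip : Fin n → ℝ)
    (hclip : ∀ i, clip i =
      (-(∑ j ∈ Finset.univ.erase i, (a j * xhat j - |a j| * ε j)) - c) / a i)
    (lo hi : Fin n → ℝ)
    (hlo : ∀ i, lo i = if a i < 0 then max (xhat i - ε i) (clip i) else xhat i - ε i)
    (hhi : ∀ i, hi i = if 0 < a i then min (xhat i + ε i) (clip i) else xhat i + ε i) :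
    -- (i) feasible set ⊆ clipped box ⊆ original box
    (∀ x : Fin n → ℝ, (∀ j, xhat j - ε j ≤ x j ∧ x j ≤ xhat j + ε j) →
      ∑ j, a j * x j + c ≤ 0 → ∀ i, lo i ≤ x i ∧ x i ≤ hi i) ∧
    (∀ i, xhat i - ε i ≤ lo i ∧ hi i ≤ xhat i + ε i) ∧
    -- (ii) any axis-aligned box containing the feasible set contains the clipped box
    (∀ lo' hi' : Fin n → ℝ,
      (∀ x : Fin n → ℝ, (∀ j, xhat j - ε j ≤ x j ∧ x j ≤ xhat j + ε j) →
        ∑ j, a j * x j + c ≤ 0 → ∀ i, lo' i ≤ x i ∧ x i ≤ hi' i) →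
      ∀ i, lo' i ≤ lo i ∧ hi i ≤ hi' i) :=
  clipped_box_tightest_general n a xhat ε c hfeas clip hclip lo hi hlo hhi
end

section
/- Infeasibility detection via clipping: if applying the closed-form clipping updates for constraint aᵀx + c ≤ 0 to the box {x : x̂ − ε ≤ x ≤ x̂ + ε} produces, in some coordinate i, a clipped upper bound strictly less than the lower bound x̂ᵢ − εᵢ (or a clipped lower bound strictly greater than x̂ᵢ + εᵢ), then no x in the box satisfies aᵀx + c ≤ 0. -/
open Finset

/-! A point `x` of the box has `aⱼxⱼ ≥ aⱼx̂ⱼ - |aⱼ|εⱼ` in every coordinate, so for a feasible `x`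
the term `aᵢxᵢ` is at most the clipping numerator `-Σ_{j≠i}(aⱼx̂ⱼ - |aⱼ|εⱼ) - c`. Dividing by `aᵢ`
puts `xᵢ` on the feasible side of the clipped bound, which is incompatible with that bound
crossing the opposite face of the box. -/

theorem mul_sub_abs_mul_le_mul_s12 {α : Type*} [CommRing α] [LinearOrder α] [IsStrictOrderedRing α]
    {a x y e : α} (h : |x - y| ≤ e) : a * y - |a| * e ≤ a * x := by
  have : -(|a| * e) ≤ a * (x - y) :=
    calc -(|a| * e) ≤ -|a * (x - y)| := by
          rw [abs_mul]; exact neg_le_neg (mul_le_mul_of_nonneg_left h (abs_nonneg a))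
      _ ≤ a * (x - y) := neg_abs_le _
  linarith

section Clipping

variable {ι : Type*} [Fintype ι] [DecidableEq ι] (a xhat ε : ι → ℝ) (c : ℝ)

def clipNumerator (i : ι) : ℝ :=
  -(∑ j ∈ univ.erase i, (a j * xhat j - |a j| * ε j)) - c

variable {a xhat ε c}

theorem mul_le_clipNumerator {x : ι → ℝ} (hx : ∀ j, |x j - xhat j| ≤ ε j)
    (hfeas : ∑ j, a j * x j + c ≤ 0) (i : ι) : a i * x i ≤ clipNumerator a xhat ε c i := by
  have hrest : ∑ j ∈ univ.erase i, (a j * xhat j - |a j| * ε j) ≤ ∑ j ∈ univ.erase i, a j * x j :=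
    sum_le_sum fun j _ => mul_sub_abs_mul_le_mul_s12 (hx j)
  have hsplit : a i * x i + ∑ j ∈ univ.erase i, a j * x j = ∑ j, a j * x j :=
    add_sum_erase univ (fun j => a j * x j) (mem_univ i)
  unfold clipNumerator
  linarith

end Clipping

theorem clipping_detects_infeasibility_general
    (n : ℕ) (a xhat ε : Fin n → ℝ) (c : ℝ)
    (clip : Fin n → ℝ)
    (hclip : ∀ i, clip i =
      (-(∑ j ∈ Finset.univ.erase i, (a j * xhat j - |a j| * ε j)) - c) / a i)
    (i : Fin n)
    (hcross : (0 < a i ∧ clip i < xhat i - ε i) ∨ (a i < 0 ∧ xhat i + ε i < clip i)) :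
    ¬ ∃ x : Fin n → ℝ, (∀ j, xhat j - ε j ≤ x j ∧ x j ≤ xhat j + ε j) ∧
      ∑ j, a j * x j + c ≤ 0 := by
  rintro ⟨x, hbox, hfeas⟩
  have hdist : ∀ j, |x j - xhat j| ≤ ε j := fun j =>
    abs_sub_le_iff.mpr ⟨by linarith [hbox j], by linarith [hbox j]⟩
  have hnum := mul_le_clipNumerator hdist hfeas i
  have hclip_i : clip i = clipNumerator a xhat ε c i / a i := hclip i
  rcases hcross with ⟨hpos, hlt⟩ | ⟨hneg, hgt⟩
  · have : x i ≤ clip i := hclip_i ▸ (le_div_iff₀ hpos).mpr (by linarith)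
    linarith [hbox i]
  · have : clip i ≤ x i := hclip_i ▸ (div_le_iff_of_neg hneg).mpr (by linarith)
    linarith [hbox i]

/-- Infeasibility detection: if some clipped bound crosses the opposite original bound,
the constraint is infeasible over the box. -/
theorem clipping_detects_infeasibility
    (n : ℕ) (a xhat ε : Fin n → ℝ) (c : ℝ)
    (hε : ∀ j, 0 ≤ ε j)
    (clip : Fin n → ℝ)
    (hclip : ∀ i, clip i =
      (-(∑ j ∈ Finset.univ.erase i, (a j * xhat j - |a j| * ε j)) - c) / a i)
    (i : Fin n)
    (hcross : (0 < a i ∧ clip i < xhat i - ε i) ∨ (a i < 0 ∧ xhat i + ε i < clip i)) :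
    ¬ ∃ x : Fin n → ℝ, (∀ j, xhat j - ε j ≤ x j ∧ x j ≤ xhat j + ε j) ∧
      ∑ j, a j * x j + c ≤ 0 :=
  clipping_detects_infeasibility_general n a xhat ε c clip hclip i hcross
end
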